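/- arXiv:1001.5104 — 4 statements merged into one kernel-verified Lean document; each statement's English description precedes it below -/
import Mathlib

section
/- For any element x = (a_1,...,a_n) of the rook monoid R_n, the two length formulas agree: (sum over i of a_i^*) − coinv(x) = (sum over i of a_i) + inv(x), where a_i^* = a_i + n − i if a_i ≠ 0 and a_i^* = 0 if a_i = 0. -/
open Finset

variable {n : ℕ}

/-- An element of the rook monoid `R_n` in one-line notation: a sequence of
entries in `{0,...,n}` whose nonzero entries are pairwise distinct. -/
def IsRook (n : ℕ) (a : Fin n → ℕ) : Prop :=
  (∀ i, a i ≤ n) ∧ ∀ i j, a i ≠ 0 → a i = a j → i = j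

/-- number of inversions -/
def rinv (a : Fin n → ℕ) : ℕ :=
  ((univ ×ˢ univ).filter fun p : Fin n × Fin n => p.1 < p.2 ∧ a p.2 < a p.1).card

/-- number of coinversion pairs -/
def rcoinv (a : Fin n → ℕ) : ℕ :=
  ((univ ×ˢ univ).filter fun p : Fin n × Fin n => p.1 < p.2 ∧ 0 < a p.1 ∧ a p.1 < a p.2).card

/-- the length function ℓ -/
def rlen (a : Fin n → ℕ) : ℕ := (∑ i, a i) + rinv a

/-- type 1 generating relation: increase a single entry -/
def Step1 (a b : Fin n → ℕ) : Prop := ∃ i, a i < b i ∧ ∀ j, j ≠ i → a j = b j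

/-- type 2 generating relation: swap two entries, larger one first -/
def Step2 (a b : Fin n → ℕ) : Prop :=
  ∃ i j, i < j ∧ a i < a j ∧ b i = a j ∧ b j = a i ∧ ∀ k, k ≠ i → k ≠ j → a k = b k

/-- the Bruhat-Chevalley-Renner order on `R_n` -/
def RookLe (n : ℕ) (a b : Fin n → ℕ) : Prop :=
  Relation.ReflTransGen (fun x y => IsRook n x ∧ IsRook n y ∧ (Step1 x y ∨ Step2 x y)) a b

def RookLt (n : ℕ) (a b : Fin n → ℕ) : Prop := RookLe n a b ∧ a ≠ b

/-- covering relation of the Bruhat-Chevalley-Renner order -/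
def RookCov (n : ℕ) (a b : Fin n → ℕ) : Prop :=
  RookLt n a b ∧ ∀ z, RookLt n a z → RookLt n z b → False

/-- the edge labeling `F` on covering relations -/
noncomputable def Flabel (a b : Fin n → ℕ) : ℕ × ℕ := by
  classical
  exact if h : ∃ i, a i < b i ∧ ∀ j, j ≠ i → a j = b j then (a h.choose, b h.choose)
  else if h2 : ∃ p : Fin n × Fin n, p.1 < p.2 ∧ a p.1 < a p.2 ∧ b p.1 = a p.2 ∧ b p.2 = a p.1 ∧
      ∀ k, k ≠ p.1 → k ≠ p.2 → a k = b k then (a h2.choose.1, a h2.choose.2)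
  else (0, 0)

/-- lexicographic (strict) order on labels -/
def pairLt (p q : ℕ × ℕ) : Prop := p.1 < q.1 ∨ (p.1 = q.1 ∧ p.2 < q.2)

def pairLe (p q : ℕ × ℕ) : Prop := p = q ∨ pairLt p q

/-- lexicographic comparison of label sequences -/
def lexLe (l m : List (ℕ × ℕ)) : Prop := l = m ∨ List.Lex pairLt l m

/-- the Jordan-Hölder sequence of labels of a chain -/
noncomputable def labels (c : List (Fin n → ℕ)) : List (ℕ × ℕ) :=
  List.zipWith Flabel c c.tail

/-- a maximal chain in the interval `[x,y]` -/
def RookMaxChain (n : ℕ) (x y : Fin n → ℕ) (c : List (Fin n → ℕ)) : Prop :=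
  c.Chain' (RookCov n) ∧ c.head? = some x ∧ c.getLast? = some y

theorem length_formulas_agree (n : ℕ) (a : Fin n → ℕ) (ha : IsRook n a) :
    (∑ i, if a i = 0 then 0 else a i + (n - (i.1 + 1))) - rcoinv a
      = (∑ i, a i) + rinv a := by
  classical
  have h1 : (∑ i, if a i = 0 then 0 else a i + (n - (i.1 + 1)))
      = (∑ i, a i) + ∑ i, (if a i = 0 then 0 else (n - (i.1+1))) := by
    rw [← Finset.sum_add_distrib]
    apply Finset.sum_congr rfl
    intro i _
    by_cases h : a i = 0 <;> simp [h]
  have h2 : (∑ i : Fin n, (if a i = 0 then 0 else (n - (i.1+1)))) = rcoinv a + rinv a := by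
    have hcard : (∑ i : Fin n, (if a i = 0 then 0 else (n - (i.1+1))))
        = ((univ ×ˢ univ).filter fun p : Fin n × Fin n => p.1 < p.2 ∧ a p.1 ≠ 0).card := by
      rw [Finset.card_filter, Finset.sum_product]
      apply Finset.sum_congr rfl
      intro i _
      by_cases h : a i = 0
      · simp [h]
      · simp only [h, ne_eq, not_false_eq_true, and_true, if_neg]
        symm
        calc (∑ j : Fin n, if i < j then 1 else 0)
            = (Finset.filter (fun j => i < j) univ).card := by
              rw [Finset.card_filter]
          _ = (Finset.Ioi i).card := by congr 1; ext j; simp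
          _ = n - (i.1 + 1) := by rw [Fin.card_Ioi]; omega
    rw [hcard, rcoinv, rinv, ← Finset.card_union_of_disjoint]
    · congr 1
      ext p
      simp only [Finset.mem_union, Finset.mem_filter, Finset.mem_product, Finset.mem_univ,
        true_and]
      constructor
      · rintro ⟨hlt, hne⟩
        rcases lt_trichotomy (a p.1) (a p.2) with h | h | h
        · exact Or.inl ⟨hlt, Nat.pos_of_ne_zero hne, h⟩
        · exact absurd (ha.2 p.1 p.2 hne h) (ne_of_lt hlt)
        · exact Or.inr ⟨hlt, h⟩
      · rintro (⟨hl, hp, _⟩ | ⟨hl, hp⟩)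
        · exact ⟨hl, by omega⟩
        · exact ⟨hl, by omega⟩
    · rw [Finset.disjoint_filter]
      rintro p _ ⟨_, _, h1⟩ ⟨_, h2⟩
      omega
  rw [h1, h2]
  omega
end

section
/- Let x = (a_1,...,a_n) and y = (b_1,...,b_n) be elements of R_n such that for some i < j: b_i = a_j, b_j = a_i, a_i < a_j, and a_k = b_k for all k not in {i,j}. Then ℓ(y) = ℓ(x) + 1 if and only if for every s with i < s < j, either a_s > a_j or a_s < a_i. -/
open Finset

variable {n : ℕ}

/-- a maximal chain in the interval `[x,y]` -/

private def gg (a : Fin n → ℕ) (x y : Fin n) : ℤ := if x < y ∧ a y < a x then 1 else 0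

private lemma rinv_eq_sum (a : Fin n → ℕ) :
    (rinv a : ℤ) = ∑ x : Fin n, ∑ y : Fin n, gg a x y := by
  unfold rinv gg
  rw [Finset.card_filter]
  push_cast
  rw [Finset.sum_product]

private lemma sum_split3 {M : Type*} [AddCommMonoid M] {i j : Fin n} (hij : i ≠ j)
    (f : Fin n → M) :
    ∑ x : Fin n, f x = f i + f j + ∑ x ∈ univ \ {i, j}, f x := by
  have h : ({i, j} : Finset (Fin n)) ⊆ univ := Finset.subset_univ _
  rw [← Finset.sum_sdiff h, Finset.sum_pair hij]
  abel

theorem type2_cover_criterion (n : ℕ) (a b : Fin n → ℕ)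
    (ha : IsRook n a) (hb : IsRook n b) (i j : Fin n) (hij : i < j)
    (h1 : b i = a j) (h2 : b j = a i) (h3 : a i < a j)
    (hdiff : ∀ k, k ≠ i → k ≠ j → a k = b k) :
    rlen b = rlen a + 1 ↔ ∀ s, i < s → s < j → a j < a s ∨ a s < a i := by
  classical
  have hij' : i ≠ j := ne_of_lt hij
  have hne : ∀ s : Fin n, s ≠ j → a s ≠ a j := by
    intro s hs hEq
    exact hs (ha.2 s j (by omega) hEq)
  set D : Fin n → Fin n → ℤ := fun x y => gg b x y - gg a x y with hDdef
  set E : Fin n → ℤ := fun s => D s i + D s j + D i s + D j s with hEdef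
  have hD0 : ∀ x y : Fin n, x ≠ i → x ≠ j → y ≠ i → y ≠ j → D x y = 0 := by
    intro x y hx1 hx2 hy1 hy2
    show gg b x y - gg a x y = 0
    unfold gg
    rw [← hdiff x hx1 hx2, ← hdiff y hy1 hy2]
    ring
  have hDii : D i i = 0 := by
    show gg b i i - gg a i i = 0
    simp [gg]
  have hDjj : D j j = 0 := by
    show gg b j j - gg a j j = 0
    simp [gg]
  have hDji : D j i = 0 := by
    show gg b j i - gg a j i = 0
    simp [gg, lt_asymm hij]
  have hDij : D i j = 1 := by
    show gg b i j - gg a i j = 1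
    unfold gg
    rw [h1, h2, if_pos ⟨hij, h3⟩, if_neg (fun h => absurd h.2 (by omega))]
    ring
  have hEbet : ∀ s : Fin n, i < s → s < j →
      E s = ((if a i < a s then 1 else 0) - (if a j < a s then 1 else 0)
        + ((if a s < a j then 1 else 0) - (if a s < a i then 1 else 0)) : ℤ) := by
    intro s hs1 hs2
    have hbs : b s = a s := (hdiff s (ne_of_gt hs1) (ne_of_lt hs2)).symm
    show gg b s i - gg a s i + (gg b s j - gg a s j) + (gg b i s - gg a i s)
        + (gg b j s - gg a j s) = _
    unfold gg
    rw [h1, h2, hbs]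
    simp only [hs1, hs2, lt_asymm hs1, lt_asymm hs2, true_and, false_and,
      if_false, if_true]
    ring
  have hElow : ∀ s : Fin n, s < i → E s = 0 := by
    intro s hs
    have hbs : b s = a s := (hdiff s (ne_of_lt hs) (ne_of_lt (hs.trans hij))).symm
    show gg b s i - gg a s i + (gg b s j - gg a s j) + (gg b i s - gg a i s)
        + (gg b j s - gg a j s) = 0
    unfold gg
    rw [h1, h2, hbs]
    simp only [hs, hs.trans hij, lt_asymm hs, lt_asymm (hs.trans hij), true_and,
      false_and, if_false, if_true]
    ring
  have hEhigh : ∀ s : Fin n, j < s → E s = 0 := by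
    intro s hs
    have hbs : b s = a s := (hdiff s (ne_of_gt (hij.trans hs)) (ne_of_gt hs)).symm
    show gg b s i - gg a s i + (gg b s j - gg a s j) + (gg b i s - gg a i s)
        + (gg b j s - gg a j s) = 0
    unfold gg
    rw [h1, h2, hbs]
    simp only [hs, hij.trans hs, lt_asymm hs, lt_asymm (hij.trans hs), true_and,
      false_and, if_false, if_true]
    ring
  have hEnn : ∀ s ∈ univ \ ({i, j} : Finset (Fin n)), 0 ≤ E s := by
    intro s hs
    simp only [Finset.mem_sdiff, Finset.mem_insert, Finset.mem_singleton, not_or] at hs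
    rcases lt_trichotomy s i with h | h | h
    · rw [hElow s h]
    · exact absurd h hs.2.1
    rcases lt_trichotomy s j with h' | h' | h'
    · rw [hEbet s h h']
      have := hne s (ne_of_lt h')
      split_ifs <;> omega
    · exact absurd h' hs.2.2
    · rw [hEhigh s h']
  have hEzero : ∀ s : Fin n, i < s → s < j → (E s = 0 ↔ (a j < a s ∨ a s < a i)) := by
    intro s hs1 hs2
    rw [hEbet s hs1 hs2]
    have := hne s (ne_of_lt hs2)
    constructor
    · intro h
      by_contra hc
      push_neg at hc
      split_ifs at h <;> omega
    · intro h
      split_ifs <;> omega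
  -- the key identity
  have hSum : (rinv b : ℤ) = (rinv a : ℤ) + 1 + ∑ s ∈ univ \ {i, j}, E s := by
    have hdiffsum : (rinv b : ℤ) - rinv a = ∑ x : Fin n, ∑ y : Fin n, D x y := by
      rw [rinv_eq_sum, rinv_eq_sum, ← Finset.sum_sub_distrib]
      exact Finset.sum_congr rfl fun x _ => by rw [← Finset.sum_sub_distrib]
    have hrow : ∀ x ∈ univ \ ({i, j} : Finset (Fin n)),
        ∑ y : Fin n, D x y = D x i + D x j := by
      intro x hx
      simp only [Finset.mem_sdiff, Finset.mem_insert, Finset.mem_singleton, not_or] at hx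
      rw [sum_split3 hij' (fun y => D x y)]
      rw [Finset.sum_eq_zero (fun y hy => by
        simp only [Finset.mem_sdiff, Finset.mem_insert, Finset.mem_singleton, not_or] at hy
        exact hD0 x y hx.2.1 hx.2.2 hy.2.1 hy.2.2)]
      ring
    have hmain : ∑ x : Fin n, ∑ y : Fin n, D x y = 1 + ∑ s ∈ univ \ {i, j}, E s := by
      rw [sum_split3 hij' (fun x => ∑ y : Fin n, D x y),
        sum_split3 hij' (fun y => D i y), sum_split3 hij' (fun y => D j y),
        Finset.sum_congr rfl hrow, hDii, hDjj, hDij, hDji]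
      simp only [hEdef, hDdef]
      simp only [Finset.sum_add_distrib]
      ring
    omega
  -- sums of entries agree
  have hsums : ∑ k, b k = ∑ k, a k := by
    rw [sum_split3 hij' b, sum_split3 hij' a, h1, h2]
    rw [Finset.sum_congr rfl (fun k hk => by
      simp only [Finset.mem_sdiff, Finset.mem_insert, Finset.mem_singleton, not_or] at hk
      exact (hdiff k hk.2.1 hk.2.2).symm : ∀ k ∈ univ \ ({i, j} : Finset (Fin n)),
        b k = a k)]
    ring
  have hlen : rlen b = rlen a + 1 ↔ (∑ s ∈ univ \ ({i, j} : Finset (Fin n)), E s) = 0 := by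
    unfold rlen
    rw [hsums]
    omega
  rw [hlen, Finset.sum_eq_zero_iff_of_nonneg hEnn]
  constructor
  · intro h s hs1 hs2
    have hsmem : s ∈ univ \ ({i, j} : Finset (Fin n)) := by
      simp only [Finset.mem_sdiff, Finset.mem_insert, Finset.mem_singleton, not_or]
      exact ⟨Finset.mem_univ s, ne_of_gt hs1, ne_of_lt hs2⟩
    exact (hEzero s hs1 hs2).mp (h s hsmem)
  · intro h s hs
    simp only [Finset.mem_sdiff, Finset.mem_insert, Finset.mem_singleton, not_or] at hs
    rcases lt_trichotomy s i with h' | h' | h'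
    · exact hElow s h'
    · exact absurd h' hs.2.1
    rcases lt_trichotomy s j with h'' | h'' | h''
    · exact (hEzero s h' h'').mpr (h s h' h'')
    · exact absurd h'' hs.2.2
    · exact hEhigh s h''
end

section
/- In the Bruhat–Chevalley–Renner order on R_n (generated by the two types of relations below), if y covers x, then either (type 1) y and x differ in exactly one position i with a_i < b_i, or (type 2) y is obtained from x by swapping two entries a_i < a_j (i < j) placing the larger one first; moreover the rank difference condition ℓ(y) = ℓ(x) + 1 holds. -/
open Finset

variable {n : ℕ}

/-!
A cover `a ⋖ b` is a chain of generating steps with nothing strictly in between, hence a single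
step. If a value could be slotted into that step — for a type 1 step raising position `i` from
`u` to `v`, a value in `[u, v)` to the right of `i` or a value in `(u, v)` missing from `a`; for
a type 2 step swapping positions `i < j`, a value in `[a i, a j)` strictly between them — an
explicit chain of two or three steps passes through an element strictly between `a` and `b`.
Otherwise the change of `ℓ` is computed directly: a type 1 step adds `v - u` to the sum and
destroys exactly the `v - u - 1` inversions `(p, i)` with `p < i` and `u < a p < v`; a type 2
step keeps the sum and creates exactly the inversion `(i, j)`, the remaining inversions
corresponding under a relabelling of pairs through the transposition `(i j)`.
-/

section

variable {a b z : Fin n → ℕ} {i j k : Fin n} {p : Fin n × Fin n}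

def RookStep (n : ℕ) (a b : Fin n → ℕ) : Prop :=
  IsRook n a ∧ IsRook n b ∧ (Step1 a b ∨ Step2 a b)

theorem IsRook.update (ha : IsRook n a) {t : ℕ} (htn : t ≤ n) (hfresh : ∀ k, a k ≠ t) :
    IsRook n (Function.update a i t) := by
  refine ⟨fun k => ?_, fun k l hk hkl => ?_⟩
  · rw [Function.update_apply]
    split_ifs
    exacts [htn, ha.1 k]
  · simp only [Function.update_apply] at hk hkl
    split_ifs at hk hkl with hki hli hli
    · exact hki.trans hli.symm
    · exact absurd hkl.symm (hfresh l)
    · exact absurd hkl (hfresh k)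
    · exact ha.2 k l hk hkl

theorem IsRook.comp_swap (ha : IsRook n a) (i j : Fin n) : IsRook n (a ∘ Equiv.swap i j) :=
  ⟨fun _ => ha.1 _, fun _ _ h0 h => (Equiv.swap i j).injective (ha.2 _ _ h0 h)⟩

theorem IsRook.apply_ne_of_eq_off (hb : IsRook n b) (hi : a i < b i)
    (hoff : ∀ j, j ≠ i → a j = b j) (k : Fin n) : a k ≠ b i := by
  rcases eq_or_ne k i with rfl | hki
  · exact hi.ne
  · rw [hoff k hki]
    exact fun hk => hki (hb.2 k i (by omega) hk)

theorem RookStep.ne (h : RookStep n a b) : a ≠ b := by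
  rintro rfl
  rcases h.2.2 with ⟨i, hi, -⟩ | ⟨i, j, -, hlt, hbi, -, -⟩ <;> omega

theorem RookCov.eq_of_step_of_le (h : RookCov n a b) (haz : RookStep n a z)
    (hzb : RookLe n z b) : z = b :=
  by_contra fun hne => h.2 z ⟨.single haz, haz.ne⟩ ⟨hzb, hne⟩

theorem RookCov.rookStep (h : RookCov n a b) : RookStep n a b := by
  rcases h.1.1.cases_head with rfl | ⟨c, hac, hcb⟩
  · exact absurd rfl h.1.2
  · obtain rfl := h.eq_of_step_of_le hac hcb
    exact hac

theorem RookCov.step1_right (h : RookCov n a b) (hi : a i < b i)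
    (hoff : ∀ j, j ≠ i → a j = b j) (hik : i < k) : a k < a i ∨ b i ≤ a k := by
  by_contra! hk
  obtain ⟨ha, hb, -⟩ := h.rookStep
  have hik' : i ≠ k := hik.ne
  -- the chain `a < z < w ≤ b` passes strictly between `a` and `b`
  set z := Function.update a k (b i)
  set w := z ∘ Equiv.swap i k
  have hzi : z i = a i := Function.update_of_ne hik' _ _
  have hzk : z k = b i := Function.update_self _ _ _
  have hwi : w i = b i := by simp [w, hzk]
  have hwk : w k = a i := by simp [w, hzi]
  have hwm : ∀ m, m ≠ i → m ≠ k → w m = b m := fun m hmi hmk => by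
    simp [w, z, Equiv.swap_apply_of_ne_of_ne hmi hmk, hmk, hoff m hmi]
  have hz : IsRook n z := ha.update (hb.1 i) (hb.apply_ne_of_eq_off hi hoff)
  have hw : IsRook n w := hz.comp_swap i k
  have haz : RookStep n a z :=
    ⟨ha, hz, .inl ⟨k, hzk ▸ hk.2, fun m hm => (Function.update_of_ne hm _ _).symm⟩⟩
  have hzw : RookStep n z w := ⟨hz, hw, .inr ⟨i, k, hik, by rwa [hzi, hzk], by simp [w],
    by simp [w], fun m hmi hmk => by simp [w, Equiv.swap_apply_of_ne_of_ne hmi hmk]⟩⟩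
  have hwb : RookLe n w b := by
    rcases hk.1.lt_or_eq with hlt | heq
    · refine .single ⟨hw, hb, .inl ⟨k, by rwa [hwk, ← hoff k hik'.symm],
        fun m hmk => ?_⟩⟩
      rcases eq_or_ne m i with rfl | hmi
      exacts [hwi, hwm m hmi hmk]
    · suffices w = b from this ▸ .refl
      funext m
      rcases eq_or_ne m i with rfl | hmi
      · exact hwi
      rcases eq_or_ne m k with rfl | hmk
      · rw [hwk, heq, hoff m hik'.symm]
      · exact hwm m hmi hmk
  have hzb := congrFun (h.eq_of_step_of_le haz (.head hzw hwb)) k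
  rw [hzk, ← hoff k hik'.symm] at hzb
  omega

theorem RookCov.step1_left (h : RookCov n a b) (hi : a i < b i)
    (hoff : ∀ j, j ≠ i → a j = b j) {t : ℕ} (hit : a i < t) (htb : t < b i) :
    ∃ p < i, a p = t := by
  by_contra! hfree
  obtain ⟨ha, hb, -⟩ := h.rookStep
  have hfresh : ∀ p, a p ≠ t := fun p hp => by
    rcases lt_trichotomy p i with hpi | rfl | hip
    · exact hfree p hpi hp
    · omega
    · have := h.step1_right hi hoff hip
      omega
  set z := Function.update a i t
  have hzi : z i = t := Function.update_self _ _ _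
  have hzm : ∀ m, m ≠ i → z m = a m := fun m hm => Function.update_of_ne hm _ _
  have hz : IsRook n z := ha.update (by have := hb.1 i; omega) hfresh
  have hzb := congrFun (h.eq_of_step_of_le
    ⟨ha, hz, .inl ⟨i, hzi ▸ hit, fun m hm => (hzm m hm).symm⟩⟩
    (.single ⟨hz, hb, .inl ⟨i, hzi ▸ htb, fun m hm => by rw [hzm m hm, hoff m hm]⟩⟩)) i
  omega

theorem RookCov.step2_between (h : RookCov n a b) (hij : i < j) (hlt : a i < a j)
    (hbi : b i = a j) (hbj : b j = a i) (hoff : ∀ k, k ≠ i → k ≠ j → a k = b k)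
    (hik : i < k) (hkj : k < j) : a k < a i ∨ a j ≤ a k := by
  by_contra! hk
  obtain ⟨ha, hb, -⟩ := h.rookStep
  have hik' : i ≠ k := hik.ne
  have hkj' : k ≠ j := hkj.ne
  have hij' : i ≠ j := hij.ne
  set z := a ∘ Equiv.swap k j
  set w := z ∘ Equiv.swap i k
  have hzi : z i = a i := by simp [z, Equiv.swap_apply_of_ne_of_ne hik' hij']
  have hzk : z k = a j := by simp [z]
  have hwi : w i = b i := by simp [w, hzk, hbi]
  have hwk : w k = a i := by simp [w, hzi]
  have hwj : w j = a k := by simp [w, z, Equiv.swap_apply_of_ne_of_ne hij'.symm hkj'.symm]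
  have hwm : ∀ m, m ≠ i → m ≠ k → m ≠ j → w m = b m := fun m hmi hmk hmj => by
    simp [z, w, Equiv.swap_apply_of_ne_of_ne hmi hmk, Equiv.swap_apply_of_ne_of_ne hmk hmj,
      hoff m hmi hmj]
  have hz : IsRook n z := ha.comp_swap k j
  have hw : IsRook n w := hz.comp_swap i k
  have haz : RookStep n a z := ⟨ha, hz, .inr ⟨k, j, hkj, hk.2, hzk, by simp [z],
    fun m hmk hmj => by simp [z, Equiv.swap_apply_of_ne_of_ne hmk hmj]⟩⟩
  have hzw : RookStep n z w := ⟨hz, hw, .inr ⟨i, k, hik, by rwa [hzi, hzk], by simp [w],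
    by simp [w], fun m hmi hmk => by simp [w, Equiv.swap_apply_of_ne_of_ne hmi hmk]⟩⟩
  have hwb : RookLe n w b := by
    rcases hk.1.lt_or_eq with hlt' | heq
    · refine .single ⟨hw, hb, .inr ⟨k, j, hkj, by omega, by rw [hwj, hoff k hik'.symm hkj'],
        by rw [hwk, hbj], fun m hmk hmj => ?_⟩⟩
      rcases eq_or_ne m i with rfl | hmi
      exacts [hwi, hwm m hmi hmk hmj]
    · suffices w = b from this ▸ .refl
      funext m
      rcases eq_or_ne m i with rfl | hmi
      · exact hwi
      rcases eq_or_ne m k with rfl | hmk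
      · rw [hwk, heq, hoff m hik'.symm hkj']
      rcases eq_or_ne m j with rfl | hmj
      · rw [hwj, hbj, heq]
      · exact hwm m hmi hmk hmj
  have hzb := congrFun (h.eq_of_step_of_le haz (.head hzw hwb)) k
  rw [hzk, ← hoff k hik'.symm hkj'] at hzb
  omega

def rinvSet (a : Fin n → ℕ) : Finset (Fin n × Fin n) :=
  (univ ×ˢ univ).filter fun p : Fin n × Fin n => p.1 < p.2 ∧ a p.2 < a p.1

theorem mem_rinvSet : p ∈ rinvSet a ↔ p.1 < p.2 ∧ a p.2 < a p.1 := by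
  simp [rinvSet]

def leftBetween (a : Fin n → ℕ) (i : Fin n) (v : ℕ) : Finset (Fin n) :=
  univ.filter fun p => p < i ∧ a i < a p ∧ a p < v

theorem mem_leftBetween {v : ℕ} :
    k ∈ leftBetween a i v ↔ k < i ∧ a i < a k ∧ a k < v := by
  simp [leftBetween]

theorem apply_cases_of_step1 (hoff : ∀ j, j ≠ i → a j = b j) (x : Fin n) :
    (x = i ∧ a x = a i ∧ b x = b i) ∨ (x ≠ i ∧ b x = a x) := by
  rcases eq_or_ne x i with rfl | hxi
  exacts [.inl ⟨rfl, rfl, rfl⟩, .inr ⟨hxi, (hoff x hxi).symm⟩]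

theorem rinvSet_eq_union_of_step1 (hb : IsRook n b) (hi : a i < b i)
    (hoff : ∀ j, j ≠ i → a j = b j) (hright : ∀ k, i < k → a k < a i ∨ b i ≤ a k) :
    rinvSet a = rinvSet b ∪ (leftBetween a i (b i)).map (Function.Embedding.sectL _ i) := by
  ext ⟨q, r⟩
  simp only [mem_rinvSet, mem_union, mem_map, mem_leftBetween, Function.Embedding.sectL_apply,
    Prod.mk.injEq, existsAndEq, true_and]
  have hq := apply_cases_of_step1 hoff q
  have hr := apply_cases_of_step1 hoff r
  have hqb := hb.apply_ne_of_eq_off hi hoff q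
  have hrr := hright r
  constructor <;> intro h <;> omega

theorem card_filter_of_step1 (ha : IsRook n a)
    (hleft : ∀ t, a i < t → t < b i → ∃ p < i, a p = t) :
    #(leftBetween a i (b i)) = b i - a i - 1 := by
  rw [← Nat.card_Ioo]
  refine card_bij (fun p _ => a p) (fun p hp => ?_) (fun p hp q _ hpq => ?_) (fun t ht => ?_)
  · exact mem_Ioo.2 (mem_leftBetween.1 hp).2
  · exact ha.2 p q (by have := mem_leftBetween.1 hp; omega) hpq
  · obtain ⟨p, hpi, rfl⟩ := hleft t (mem_Ioo.1 ht).1 (mem_Ioo.1 ht).2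
    exact ⟨p, mem_leftBetween.2 ⟨hpi, mem_Ioo.1 ht⟩, rfl⟩

theorem rinv_eq_add_of_step1 (ha : IsRook n a) (hb : IsRook n b) (hi : a i < b i)
    (hoff : ∀ j, j ≠ i → a j = b j) (hright : ∀ k, i < k → a k < a i ∨ b i ≤ a k)
    (hleft : ∀ t, a i < t → t < b i → ∃ p < i, a p = t) :
    rinv a = rinv b + (b i - a i - 1) := by
  have hdisj :
      Disjoint (rinvSet b) ((leftBetween a i (b i)).map (Function.Embedding.sectL _ i)) := by
    simp only [disjoint_left, mem_rinvSet, mem_map, mem_leftBetween, Function.Embedding.sectL_apply]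
    rintro _ ⟨-, hv⟩ ⟨p, ⟨hpi, -, hpb⟩, rfl⟩
    rw [← hoff p hpi.ne] at hv
    exact hv.asymm hpb
  change #(rinvSet a) = #(rinvSet b) + _
  rw [rinvSet_eq_union_of_step1 hb hi hoff hright, card_union_of_disjoint hdisj, card_map,
    card_filter_of_step1 ha hleft]

theorem rlen_eq_add_one_of_step1 (ha : IsRook n a) (hb : IsRook n b) (hi : a i < b i)
    (hoff : ∀ j, j ≠ i → a j = b j) (hright : ∀ k, i < k → a k < a i ∨ b i ≤ a k)
    (hleft : ∀ t, a i < t → t < b i → ∃ p < i, a p = t) :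
    rlen b = rlen a + 1 := by
  have hinv := rinv_eq_add_of_step1 ha hb hi hoff hright hleft
  have hsum : ∑ k, b k + a i = ∑ k, a k + b i := by
    have hrest : ∑ k ∈ univ.erase i, b k = ∑ k ∈ univ.erase i, a k :=
      sum_congr rfl fun k hk => (hoff k (ne_of_mem_erase hk)).symm
    rw [← sum_erase_add univ b (mem_univ i), ← sum_erase_add univ a (mem_univ i), hrest]
    ring
  unfold rlen
  omega

-- Pairs with one entry in `{i, j}` and the other outside `[i, j]` are relabelled through the
-- transposition `(i j)`; all other pairs are fixed.
def crossSwap (i j : Fin n) (p : Fin n × Fin n) : Fin n × Fin n :=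
  if p.1 = i ∧ j < p.2 then (j, p.2)
  else if p.1 = j then (i, p.2)
  else if p.2 = i then (p.1, j)
  else if p.2 = j ∧ p.1 < i then (p.1, i)
  else p

theorem crossSwap_crossSwap (hij : i < j) (hp : p.1 < p.2) :
    crossSwap i j (crossSwap i j p) = p := by
  obtain ⟨q, r⟩ := p
  unfold crossSwap
  split_ifs <;> simp_all <;> omega

theorem apply_cases_of_step2 (hbi : b i = a j) (hbj : b j = a i)
    (hoff : ∀ k, k ≠ i → k ≠ j → a k = b k) (x : Fin n) :
    (x = i ∧ a x = a i ∧ b x = a j) ∨ (x = j ∧ a x = a j ∧ b x = a i) ∨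
      (x ≠ i ∧ x ≠ j ∧ b x = a x) := by
  rcases eq_or_ne x i with rfl | hxi
  · exact .inl ⟨rfl, rfl, hbi⟩
  rcases eq_or_ne x j with rfl | hxj
  · exact .inr (.inl ⟨rfl, rfl, hbj⟩)
  exact .inr (.inr ⟨hxi, hxj, (hoff x hxi hxj).symm⟩)

theorem crossSwap_mem_rinvSet_erase (hij : i < j) (hlt : a i < a j) (hbi : b i = a j)
    (hbj : b j = a i) (hoff : ∀ k, k ≠ i → k ≠ j → a k = b k) (hp : p ∈ rinvSet a) :
    crossSwap i j p ∈ (rinvSet b).erase (i, j) := by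
  obtain ⟨q, r⟩ := p
  rw [mem_rinvSet] at hp
  have hq := apply_cases_of_step2 hbi hbj hoff q
  have hr := apply_cases_of_step2 hbi hbj hoff r
  rw [mem_erase, mem_rinvSet]
  unfold crossSwap
  dsimp only at hp ⊢
  split_ifs <;> simp only [ne_eq, Prod.mk.injEq] <;> omega

theorem crossSwap_mem_rinvSet (ha : IsRook n a) (hij : i < j) (hlt : a i < a j)
    (hbi : b i = a j) (hbj : b j = a i) (hoff : ∀ k, k ≠ i → k ≠ j → a k = b k)
    (hmid : ∀ k, i < k → k < j → a k < a i ∨ a j ≤ a k)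
    (hp : p ∈ (rinvSet b).erase (i, j)) : crossSwap i j p ∈ rinvSet a := by
  obtain ⟨q, r⟩ := p
  rw [mem_erase, mem_rinvSet] at hp
  have hq := apply_cases_of_step2 hbi hbj hoff q
  have hr := apply_cases_of_step2 hbi hbj hoff r
  have hmq := hmid q
  have hmr := hmid r
  have hjq : a j = a q → j = q := ha.2 j q (by omega)
  rw [mem_rinvSet]
  unfold crossSwap
  dsimp only at hp ⊢
  simp only [ne_eq, Prod.mk.injEq] at hp
  split_ifs <;> dsimp only <;> omega

theorem rinv_eq_add_one_of_step2 (ha : IsRook n a) (hij : i < j) (hlt : a i < a j)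
    (hbi : b i = a j) (hbj : b j = a i) (hoff : ∀ k, k ≠ i → k ≠ j → a k = b k)
    (hmid : ∀ k, i < k → k < j → a k < a i ∨ a j ≤ a k) :
    rinv b = rinv a + 1 := by
  have hcard : #(rinvSet a) = #((rinvSet b).erase (i, j)) :=
    card_nbij' (crossSwap i j) (crossSwap i j)
      (fun _ hp => crossSwap_mem_rinvSet_erase hij hlt hbi hbj hoff hp)
      (fun _ hp => crossSwap_mem_rinvSet ha hij hlt hbi hbj hoff hmid hp)
      (fun _ hp => crossSwap_crossSwap hij (mem_rinvSet.1 hp).1)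
      (fun _ hp => crossSwap_crossSwap hij (mem_rinvSet.1 (mem_of_mem_erase hp)).1)
  have hij_mem : (i, j) ∈ rinvSet b := mem_rinvSet.2 ⟨hij, by dsimp only; omega⟩
  rw [card_erase_of_mem hij_mem] at hcard
  have := card_pos.2 ⟨_, hij_mem⟩
  change #(rinvSet b) = #(rinvSet a) + 1
  omega

theorem rlen_eq_add_one_of_step2 (ha : IsRook n a) (hij : i < j) (hlt : a i < a j)
    (hbi : b i = a j) (hbj : b j = a i) (hoff : ∀ k, k ≠ i → k ≠ j → a k = b k)
    (hmid : ∀ k, i < k → k < j → a k < a i ∨ a j ≤ a k) :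
    rlen b = rlen a + 1 := by
  have hb : b = a ∘ Equiv.swap i j := funext fun x => by
    rcases apply_cases_of_step2 hbi hbj hoff x with
      ⟨rfl, -, h⟩ | ⟨rfl, -, h⟩ | ⟨hxi, hxj, h⟩
    · simp [h]
    · simp [h]
    · simp [h, Equiv.swap_apply_of_ne_of_ne hxi hxj]
  have hsum : ∑ k, b k = ∑ k, a k := by
    rw [hb]
    exact Equiv.sum_comp (Equiv.swap i j) a
  rw [rlen, rlen, hsum, rinv_eq_add_one_of_step2 ha hij hlt hbi hbj hoff hmid, add_assoc]

end

theorem cover_is_type1_or_type2_general (n : ℕ) (a b : Fin n → ℕ) (h : RookCov n a b) :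
    (Step1 a b ∨ Step2 a b) ∧ rlen b = rlen a + 1 := by
  obtain ⟨ha, hb, hstep⟩ := h.rookStep
  refine ⟨hstep, ?_⟩
  rcases hstep with ⟨i, hi, hoff⟩ | ⟨i, j, hij, hlt, hbi, hbj, hoff⟩
  · exact rlen_eq_add_one_of_step1 ha hb hi hoff (fun _ => h.step1_right hi hoff)
      (fun _ => h.step1_left hi hoff)
  · exact rlen_eq_add_one_of_step2 ha hij hlt hbi hbj hoff
      (fun _ => h.step2_between hij hlt hbi hbj hoff)

theorem cover_is_type1_or_type2 (n : ℕ) (a b : Fin n → ℕ)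
    (ha : IsRook n a) (hb : IsRook n b) (h : RookCov n a b) :
    (Step1 a b ∨ Step2 a b) ∧ rlen b = rlen a + 1 :=
  cover_is_type1_or_type2_general n a b h
end

section
/- The Bruhat–Chevalley–Renner order on R_n is a graded partial order: if x < y then ℓ(x) < ℓ(y), and y covers x if and only if x < y and ℓ(y) = ℓ(x) + 1. -/
open Finset

variable {n : ℕ}

section Aux
variable {n : ℕ}

open Classical in
private lemma mem_invSet {a : Fin n → ℕ} {p : Fin n × Fin n} :
    p ∈ ((univ ×ˢ univ).filter fun p : Fin n × Fin n => p.1 < p.2 ∧ a p.2 < a p.1) ↔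
      p.1 < p.2 ∧ a p.2 < a p.1 := by
  simp

/-- swap two entries -/
private def swapAt (a : Fin n → ℕ) (i j : Fin n) : Fin n → ℕ :=
  fun m => if m = i then a j else if m = j then a i else a m

private lemma swapAt_eq_comp (a : Fin n → ℕ) (i j : Fin n) :
    swapAt a i j = a ∘ (Equiv.swap i j) := by
  funext m
  simp only [swapAt, Function.comp_apply, Equiv.swap_apply_def]
  split_ifs <;> rfl

private lemma isRook_swapAt {a : Fin n → ℕ} (ha : IsRook n a) (i j : Fin n) :
    IsRook n (swapAt a i j) := by
  rw [swapAt_eq_comp]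
  refine ⟨fun k => ha.1 _, fun k l hk hkl => ?_⟩
  have := ha.2 _ _ hk hkl
  exact (Equiv.swap i j).injective this

private lemma sum_swapAt (a : Fin n → ℕ) (i j : Fin n) :
    ∑ k, swapAt a i j k = ∑ k, a k := by
  rw [swapAt_eq_comp]
  exact Equiv.sum_comp (Equiv.swap i j) a

private lemma swapAt_fst (a : Fin n → ℕ) (i j : Fin n) : swapAt a i j i = a j := by
  simp [swapAt]

private lemma swapAt_snd (a : Fin n → ℕ) {i j : Fin n} (hij : i ≠ j) : swapAt a i j j = a i := by
  simp [swapAt, hij.symm]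

private lemma swapAt_other (a : Fin n → ℕ) {i j m : Fin n} (h1 : m ≠ i) (h2 : m ≠ j) :
    swapAt a i j m = a m := by
  simp [swapAt, h1, h2]

private lemma step2_swapAt {a : Fin n → ℕ} {i j : Fin n} (hij : i < j) (hv : a i < a j) :
    Step2 a (swapAt a i j) :=
  ⟨i, j, hij, hv, swapAt_fst a i j, swapAt_snd a hij.ne,
    fun k h1 h2 => (swapAt_other a h1 h2).symm⟩

/-- a single `Step1` strictly increases the length -/
private lemma step1_lt {a b : Fin n → ℕ} (ha : IsRook n a) (hb : IsRook n b)
    (h : Step1 a b) : rlen a < rlen b := by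
  classical
  obtain ⟨i, hi, hoff⟩ := h
  set v := a i with hv
  set w := b i with hw
  set A := ((univ ×ˢ univ).filter fun p : Fin n × Fin n => p.1 < p.2 ∧ a p.2 < a p.1) with hA
  set B := ((univ ×ˢ univ).filter fun p : Fin n × Fin n => p.1 < p.2 ∧ b p.2 < b p.1) with hB
  have hw0 : 0 < w := lt_of_le_of_lt (Nat.zero_le v) hi
  -- characterize A \ B
  have hdiff : ∀ p ∈ A \ B, p.2 = i ∧ v < a p.1 ∧ a p.1 < w := by
    intro p hp
    rw [Finset.mem_sdiff, hA, hB, mem_invSet, mem_invSet] at hp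
    obtain ⟨⟨hp1, hp2⟩, hnB⟩ := hp
    by_cases h2i : p.2 = i
    · refine ⟨h2i, ?_, ?_⟩
      · rw [hv, ← h2i]; exact hp2
      · have hp1i : p.1 ≠ i := by rw [← h2i]; exact hp1.ne
        have hb1 : b p.1 = a p.1 := (hoff _ hp1i).symm
        have hle : a p.1 ≤ w := by
          by_contra hgt
          exact hnB ⟨hp1, by rw [h2i, hb1, ← hw]; omega⟩
        rcases lt_or_eq_of_le hle with h | h
        · exact h
        · exfalso
          have : p.1 = i := hb.2 p.1 i (by rw [hb1, h]; omega) (by rw [hb1, h, hw])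
          exact hp1i this
    · exfalso
      by_cases h1i : p.1 = i
      · refine hnB ⟨hp1, ?_⟩
        have : b p.2 = a p.2 := (hoff _ h2i).symm
        rw [this, h1i]
        calc a p.2 < a i := h1i ▸ hp2
          _ < b i := hi
      · exact hnB ⟨hp1, by rw [← hoff _ h2i, ← hoff _ h1i]; exact hp2⟩
  have hcard1 : (A \ B).card ≤ w - v - 1 := by
    have hmaps : ∀ p ∈ A \ B, (fun p : Fin n × Fin n => a p.1) p ∈ Finset.Ioo v w := by
      intro p hp
      obtain ⟨_, h1, h2⟩ := hdiff p hp
      exact Finset.mem_Ioo.2 ⟨h1, h2⟩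
    have hinj : Set.InjOn (fun p : Fin n × Fin n => a p.1) ↑(A \ B) := by
      intro p hp q hq he
      rw [Finset.mem_coe] at hp hq
      have hp' := hdiff p hp
      have hq' := hdiff q hq
      obtain ⟨hpi, hp1, _⟩ := hp'
      obtain ⟨hqi, hq1, _⟩ := hq'
      have : p.1 = q.1 := ha.2 p.1 q.1 (by omega) he
      exact Prod.ext this (hpi.trans hqi.symm)
    have := Finset.card_le_card_of_injOn _ hmaps hinj
    rwa [Nat.card_Ioo] at this
  have hcard : A.card ≤ B.card + (w - v - 1) := by
    calc A.card ≤ (B ∪ (A \ B)).card := Finset.card_le_card (fun p hp => by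
          by_cases h : p ∈ B
          · exact Finset.mem_union_left _ h
          · exact Finset.mem_union_right _ (Finset.mem_sdiff.2 ⟨hp, h⟩))
      _ ≤ B.card + (A \ B).card := Finset.card_union_le _ _
      _ ≤ B.card + (w - v - 1) := by omega
  have hsum : (∑ k, b k) + v = (∑ k, a k) + w := by
    rw [← Finset.sum_erase_add univ b (Finset.mem_univ i),
        ← Finset.sum_erase_add univ a (Finset.mem_univ i)]
    have : ∑ k ∈ univ.erase i, b k = ∑ k ∈ univ.erase i, a k :=
      Finset.sum_congr rfl (fun j hj => (hoff j (Finset.mem_erase.1 hj).1).symm)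
    rw [this, hv, hw]
    ring
  have : rinv a = A.card := rfl
  have : rinv b = B.card := rfl
  simp only [rlen]
  have h1 : rinv a ≤ rinv b + (w - v - 1) := hcard
  omega

end Aux

section Aux2
variable {n : ℕ}

/-- a single `Step2` strictly increases the length -/
private lemma step2_lt {a b : Fin n → ℕ} (ha : IsRook n a) (hb : IsRook n b)
    (h : Step2 a b) : rlen a < rlen b := by
  classical
  obtain ⟨i, j, hij, hvw, hbi, hbj, hoff⟩ := h
  have hw0 : 0 < a j := lt_of_le_of_lt (Nat.zero_le _) hvw
  set A := ((univ ×ˢ univ).filter fun p : Fin n × Fin n => p.1 < p.2 ∧ a p.2 < a p.1) with hA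
  set B := ((univ ×ˢ univ).filter fun p : Fin n × Fin n => p.1 < p.2 ∧ b p.2 < b p.1) with hB
  have hij' : (i : Fin n) ≠ j := hij.ne
  -- sums agree
  have hsum : (∑ k, a k) = (∑ k, b k) := by
    have hab : ∀ k, a k = b (Equiv.swap i j k) := by
      intro k
      by_cases hk : k = i
      · subst hk; rw [Equiv.swap_apply_left, hbj]
      · by_cases hk2 : k = j
        · subst hk2; rw [Equiv.swap_apply_right, hbi]
        · rw [Equiv.swap_apply_of_ne_of_ne hk hk2]; exact hoff k hk hk2
    calc (∑ k, a k) = ∑ k, b (Equiv.swap i j k) := Finset.sum_congr rfl fun k _ => hab k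
      _ = ∑ k, b k := Equiv.sum_comp (Equiv.swap i j) b
  set f : Fin n × Fin n → Fin n × Fin n := (fun p =>
    if p.2 = i ∧ a p.1 < a j then (p.1, j)
    else if p.1 = j ∧ a i ≤ a p.2 then (i, p.2) else p) with hf
  set g : Fin n × Fin n → Fin n × Fin n := (fun r =>
    if r.1 = i then (if a r.2 < a i then r else (j, r.2))
    else if r.2 = j then (if a r.1 < a j then (r.1, i) else r) else r) with hg
  have key : ∀ p ∈ A, f p ∈ B.erase (i, j) ∧ g (f p) = p := by
    intro p hp
    rw [hA, mem_invSet] at hp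
    obtain ⟨hp1, hp2⟩ := hp
    by_cases h2i : p.2 = i
    · have hlt : p.1 < i := h2i ▸ hp1
      have hp1i : p.1 ≠ i := hlt.ne
      have hp1j : p.1 ≠ j := (hlt.trans hij).ne
      rw [h2i] at hp2
      have hb1 : b p.1 = a p.1 := (hoff _ hp1i hp1j).symm
      by_cases hwc : a p.1 < a j
      · have hfp : f p = (p.1, j) := by
          simp only [hf]; rw [if_pos ⟨h2i, hwc⟩]
        rw [hfp]
        refine ⟨Finset.mem_erase.2 ⟨fun hc => hp1i (congrArg Prod.fst hc), ?_⟩, ?_⟩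
        · rw [hB, mem_invSet]
          exact ⟨hlt.trans hij, by rw [hbj, hb1]; exact hp2⟩
        · simp only [hg]
          rw [if_neg hp1i, if_pos trivial, if_pos hwc]
          exact Prod.ext rfl h2i.symm
      · have haj : a j < a p.1 := by
          rcases lt_or_eq_of_le (not_lt.1 hwc) with hh | hh
          · exact hh
          · exact absurd (ha.2 j p.1 (by omega) hh) (fun hc => hp1j hc.symm)
        have hfp : f p = p := by
          simp only [hf]
          rw [if_neg (fun hc => hwc hc.2), if_neg (fun hc => hp1j hc.1)]
        rw [hfp]
        refine ⟨Finset.mem_erase.2 ⟨fun hc => hp1i (congrArg Prod.fst hc), ?_⟩, ?_⟩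
        · rw [hB, mem_invSet]
          refine ⟨hp1, ?_⟩
          rw [h2i, hbi, hb1]; exact haj
        · simp only [hg]
          rw [if_neg hp1i, if_neg (show p.2 ≠ j from fun hc => hij' (h2i.symm.trans hc))]
    · by_cases h1j : p.1 = j
      · have hjlt : j < p.2 := h1j ▸ hp1
        have hp2i : p.2 ≠ i := (hij.trans hjlt).ne'
        have hp2j : p.2 ≠ j := hjlt.ne'
        rw [h1j] at hp2
        have hb2 : b p.2 = a p.2 := (hoff _ hp2i hp2j).symm
        by_cases hvc : a i ≤ a p.2
        · have hfp : f p = (i, p.2) := by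
            simp only [hf]
            rw [if_neg (fun hc => h2i hc.1), if_pos ⟨h1j, hvc⟩]
          rw [hfp]
          refine ⟨Finset.mem_erase.2 ⟨fun hc => hp2j (congrArg Prod.snd hc), ?_⟩, ?_⟩
          · rw [hB, mem_invSet]
            exact ⟨hij.trans hjlt, by rw [hbi, hb2]; exact hp2⟩
          · simp only [hg]
            rw [if_pos trivial, if_neg (not_lt.2 hvc)]
            exact Prod.ext h1j.symm rfl
        · have hfp : f p = p := by
            simp only [hf]
            rw [if_neg (fun hc => h2i hc.1), if_neg (fun hc => hvc hc.2)]
          rw [hfp]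
          refine ⟨Finset.mem_erase.2 ⟨fun hc => hp2j (congrArg Prod.snd hc), ?_⟩, ?_⟩
          · rw [hB, mem_invSet]
            refine ⟨hp1, ?_⟩
            rw [hb2, h1j, hbj]
            exact not_le.1 hvc
          · simp only [hg]
            rw [if_neg (show p.1 ≠ i from fun hc => hij' (hc.symm.trans h1j)), if_neg hp2j]
      · have hfp : f p = p := by
          simp only [hf]
          rw [if_neg (fun hc => h2i hc.1), if_neg (fun hc => h1j hc.1)]
        rw [hfp]
        by_cases h1i : p.1 = i
        · have hp2j : p.2 ≠ j := by
            intro hc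
            rw [h1i, hc] at hp2
            omega
          refine ⟨Finset.mem_erase.2 ⟨fun hc => hp2j (congrArg Prod.snd hc), ?_⟩, ?_⟩
          · rw [hB, mem_invSet]
            refine ⟨hp1, ?_⟩
            rw [h1i, hbi, ← hoff _ h2i hp2j]
            rw [h1i] at hp2
            omega
          · simp only [hg]
            rw [if_pos h1i, if_pos (show a p.2 < a i from h1i ▸ hp2)]
        · by_cases h2j : p.2 = j
          · refine ⟨Finset.mem_erase.2 ⟨fun hc => h1i (congrArg Prod.fst hc), ?_⟩, ?_⟩
            · rw [hB, mem_invSet]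
              refine ⟨hp1, ?_⟩
              rw [h2j, hbj, ← hoff _ h1i h1j]
              rw [h2j] at hp2
              omega
            · simp only [hg]
              rw [if_neg h1i, if_pos h2j,
                if_neg (show ¬ a p.1 < a j from by rw [h2j] at hp2; omega)]
          · refine ⟨Finset.mem_erase.2 ⟨fun hc => h1i (congrArg Prod.fst hc), ?_⟩, ?_⟩
            · rw [hB, mem_invSet]
              exact ⟨hp1, by rw [← hoff _ h1i h1j, ← hoff _ h2i h2j]; exact hp2⟩
            · simp only [hg]
              rw [if_neg h1i, if_neg h2j]
  have hijB : (i, j) ∈ B := by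
    rw [hB, mem_invSet]
    exact ⟨hij, by rw [hbi, hbj]; exact hvw⟩
  have hcard : A.card ≤ (B.erase (i, j)).card := by
    apply Finset.card_le_card_of_injOn f (fun p hp => (key p hp).1)
    intro p hp q hq he
    rw [Finset.mem_coe] at hp hq
    rw [← (key p hp).2, ← (key q hq).2, he]
  have hlt : A.card < B.card := by
    have h1 := Finset.card_erase_of_mem hijB
    have h2 : 0 < B.card := Finset.card_pos.2 ⟨_, hijB⟩
    omega
  simp only [rlen]
  have h1 : rinv a = A.card := rfl
  have h2 : rinv b = B.card := rfl
  omega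

end Aux2

section Aux3
variable {n : ℕ}

private lemma rstep_lt {a b : Fin n → ℕ}
    (h : IsRook n a ∧ IsRook n b ∧ (Step1 a b ∨ Step2 a b)) : rlen a < rlen b :=
  h.2.2.elim (step1_lt h.1 h.2.1) (step2_lt h.1 h.2.1)

private lemma rle_rlen {a b : Fin n → ℕ} (h : RookLe n a b) : rlen a ≤ rlen b := by
  induction h with
  | refl => exact le_rfl
  | tail _ hstep ih => exact ih.trans (rstep_lt hstep).le

private lemma rlt_of_step {a b : Fin n → ℕ}
    (h : IsRook n a ∧ IsRook n b ∧ (Step1 a b ∨ Step2 a b)) : RookLt n a b := by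
  refine ⟨Relation.ReflTransGen.single h, ?_⟩
  intro he
  have := rstep_lt h
  rw [he] at this
  exact lt_irrefl _ this

private lemma rlt_of_chain2 {a z b : Fin n → ℕ}
    (h1 : IsRook n a ∧ IsRook n z ∧ (Step1 a z ∨ Step2 a z))
    (h2 : IsRook n z ∧ IsRook n b ∧ (Step1 z b ∨ Step2 z b)) : RookLt n a b := by
  refine ⟨Relation.ReflTransGen.head h1 (Relation.ReflTransGen.single h2), ?_⟩
  intro he
  have t1 := rstep_lt h1
  have t2 := rstep_lt h2
  rw [he] at t1
  omega

private lemma rlt_rlen {a b : Fin n → ℕ} (h : RookLt n a b) : rlen a < rlen b := by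
  obtain ⟨hle, hne⟩ := h
  rcases Relation.ReflTransGen.cases_head hle with rfl | ⟨z, hz, hzb⟩
  · exact absurd rfl hne
  · exact lt_of_lt_of_le (rstep_lt hz) (rle_rlen hzb)

private lemma isRook_update {a : Fin n → ℕ} (ha : IsRook n a) {i : Fin n} {u : ℕ} (hu : u ≤ n)
    (hfree : u ≠ 0 → ∀ j, j ≠ i → a j ≠ u) : IsRook n (Function.update a i u) := by
  classical
  constructor
  · intro k
    by_cases hk : k = i
    · rw [hk, Function.update_self]; exact hu
    · rw [Function.update_of_ne hk]; exact ha.1 k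
  · intro k l hk hkl
    by_cases h1 : k = i <;> by_cases h2 : l = i
    · rw [h1, h2]
    · exfalso
      rw [h1, Function.update_self] at hk hkl
      rw [Function.update_of_ne h2] at hkl
      exact hfree hk l h2 hkl.symm
    · exfalso
      rw [Function.update_of_ne h1] at hk hkl
      rw [h2, Function.update_self] at hkl
      exact hfree (hkl ▸ hk) k h1 hkl
    · rw [Function.update_of_ne h1] at hk hkl
      rw [Function.update_of_ne h2] at hkl
      exact ha.2 k l hk hkl

end Aux3

section Aux4
variable {n : ℕ}

private lemma step1_refine {a b : Fin n → ℕ} (ha : IsRook n a) (hb : IsRook n b)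
    (h : Step1 a b) : (∃ z, RookLt n a z ∧ RookLt n z b) ∨ rlen b ≤ rlen a + 1 := by
  classical
  obtain ⟨i, hi, hoff⟩ := h
  have hbi0 : 0 < b i := lt_of_le_of_lt (Nat.zero_le _) hi
  have hnotbi : ∀ m, m ≠ i → a m ≠ b i := by
    intro m hmi he
    have hbm : b m = b i := by rw [← hoff m hmi]; exact he
    exact hmi (hb.2 m i (by omega) hbm)
  by_cases hfree : ∃ u, a i < u ∧ u < b i ∧ ∀ j, a j ≠ u
  · obtain ⟨u, hu1, hu2, hufree⟩ := hfree
    have hz : IsRook n (Function.update a i u) :=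
      isRook_update ha (hu2.le.trans (hb.1 i)) (fun _ j _ => hufree j)
    have hs1 : Step1 a (Function.update a i u) := by
      refine ⟨i, ?_, fun j hj => ?_⟩
      · rw [Function.update_self]; exact hu1
      · rw [Function.update_of_ne hj]
    have hs2 : Step1 (Function.update a i u) b := by
      refine ⟨i, ?_, fun j hj => ?_⟩
      · rw [Function.update_self]; exact hu2
      · rw [Function.update_of_ne hj]; exact hoff j hj
    exact Or.inl ⟨_, rlt_of_step ⟨ha, hz, Or.inl hs1⟩, rlt_of_step ⟨hz, hb, Or.inl hs2⟩⟩
  · by_cases hright : ∃ k, i < k ∧ a i < a k ∧ a k < b i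
    · obtain ⟨k, hik, hak1, hak2⟩ := hright
      have hki : k ≠ i := hik.ne'
      have hz : IsRook n (swapAt a i k) := isRook_swapAt ha i k
      have hs1 : Step2 a (swapAt a i k) := step2_swapAt hik hak1
      have hz2 : IsRook n (Function.update (swapAt a i k) i (b i)) := by
        refine isRook_update hz (hb.1 i) (fun _ m hmi => ?_)
        by_cases hmk : m = k
        · rw [hmk, swapAt_snd a hik.ne]; omega
        · rw [swapAt_other a hmi hmk]
          exact hnotbi m hmi
      have hs2 : Step1 (swapAt a i k) (Function.update (swapAt a i k) i (b i)) := by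
        refine ⟨i, ?_, fun j hj => ?_⟩
        · rw [Function.update_self, swapAt_fst]; exact hak2
        · rw [Function.update_of_ne hj]
      have hs3 : Step1 (Function.update (swapAt a i k) i (b i)) b := by
        refine ⟨k, ?_, fun j hj => ?_⟩
        · rw [Function.update_of_ne hki, swapAt_snd a hik.ne, ← hoff k hki]; exact hak1
        · by_cases hji : j = i
          · rw [hji, Function.update_self]
          · rw [Function.update_of_ne hji, swapAt_other a hji hj]
            exact hoff j hji
      exact Or.inl ⟨_, rlt_of_step ⟨ha, hz, Or.inr hs1⟩,
        rlt_of_chain2 ⟨hz, hz2, Or.inl hs2⟩ ⟨hz2, hb, Or.inl hs3⟩⟩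
    · by_cases hzero : a i = 0 ∧ ∃ k, i < k ∧ a k = 0
      · obtain ⟨hv0, k, hik, hak⟩ := hzero
        have hki : k ≠ i := hik.ne'
        have hz : IsRook n (Function.update a k (b i)) := by
          refine isRook_update ha (hb.1 i) (fun _ m hmk => ?_)
          by_cases hmi : m = i
          · rw [hmi]; omega
          · exact hnotbi m hmi
        have hs1 : Step1 a (Function.update a k (b i)) := by
          refine ⟨k, ?_, fun j hj => ?_⟩
          · rw [Function.update_self, hak]; exact hbi0
          · rw [Function.update_of_ne hj]
        have hs2 : Step2 (Function.update a k (b i)) b := by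
          refine ⟨i, k, hik, ?_, ?_, ?_, fun m h1 h2 => ?_⟩
          · rw [Function.update_of_ne hik.ne, Function.update_self, hv0]; exact hbi0
          · rw [Function.update_self]
          · rw [Function.update_of_ne hik.ne, ← hoff k hki, hak, hv0]
          · rw [Function.update_of_ne h2]; exact hoff m h1
        exact Or.inl ⟨_, rlt_of_step ⟨ha, hz, Or.inl hs1⟩, rlt_of_step ⟨hz, hb, Or.inr hs2⟩⟩
      · right
        push_neg at hfree hright hzero
        -- counting: rlen b ≤ rlen a + 1
        set A := ((univ ×ˢ univ).filter
          fun p : Fin n × Fin n => p.1 < p.2 ∧ a p.2 < a p.1) with hA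
        set B := ((univ ×ˢ univ).filter
          fun p : Fin n × Fin n => p.1 < p.2 ∧ b p.2 < b p.1) with hB
        have hBA : B ⊆ A := by
          intro p hp
          rw [hB, mem_invSet] at hp
          rw [hA, mem_invSet]
          obtain ⟨hp1, hp2⟩ := hp
          by_cases h1i : p.1 = i
          · have hp2i : p.2 ≠ i := by rw [← h1i]; exact hp1.ne'
            have hb2 : b p.2 = a p.2 := (hoff _ hp2i).symm
            refine ⟨hp1, ?_⟩
            rw [h1i]
            rw [hb2, h1i] at hp2
            -- a p.2 < b i ; show a p.2 < a i
            by_contra hc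
            push_neg at hc
            rcases lt_or_eq_of_le hc with hlt | heq
            · have := hright p.2 (h1i ▸ hp1) hlt
              omega
            · by_cases hz0 : a i = 0
              · exact hzero hz0 p.2 (h1i ▸ hp1) (by omega)
              · exact hp2i (ha.2 p.2 i (by omega) heq.symm)
          · by_cases h2i : p.2 = i
            · have h1b : b p.1 = a p.1 := (hoff _ h1i).symm
              refine ⟨hp1, ?_⟩
              rw [h2i] at hp2 ⊢
              rw [h1b] at hp2
              omega
            · refine ⟨hp1, ?_⟩
              rw [hoff _ h1i, hoff _ h2i]
              exact hp2
        -- the lost inversions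
        have hpos : ∀ u ∈ Finset.Ioo (a i) (b i), ∃ j : Fin n, a j = u ∧ j < i := by
          intro u hu
          rw [Finset.mem_Ioo] at hu
          obtain ⟨j, hj⟩ := hfree u hu.1 hu.2
          refine ⟨j, hj, ?_⟩
          have hji : j ≠ i := by
            intro hc; rw [hc] at hj; omega
          rcases lt_trichotomy j i with h | h | h
          · exact h
          · exact absurd h hji
          · have := hright j h (by omega)
            omega
        have hL : ∀ u, ∀ hu : u ∈ Finset.Ioo (a i) (b i),
            (((hpos u hu).choose, i) : Fin n × Fin n) ∈ A \ B := by
          intro u hu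
          obtain ⟨hval, hlt⟩ := (hpos u hu).choose_spec
          rw [Finset.mem_sdiff, hA, hB, mem_invSet, mem_invSet]
          rw [Finset.mem_Ioo] at hu
          dsimp only
          constructor
          · exact ⟨hlt, by rw [hval]; omega⟩
          · rintro ⟨-, hc⟩
            rw [← hoff _ hlt.ne] at hc
            rw [hval] at hc
            omega
        have hcard2 : b i - a i - 1 ≤ (A \ B).card := by
          have hsub : ((Finset.Ioo (a i) (b i)).attach.image
              (fun u => (((hpos u.1 u.2).choose, i) : Fin n × Fin n))) ⊆ A \ B := by
            intro p hp
            rw [Finset.mem_image] at hp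
            obtain ⟨u, -, rfl⟩ := hp
            exact hL u.1 u.2
          have hcardim : ((Finset.Ioo (a i) (b i)).attach.image
              (fun u => (((hpos u.1 u.2).choose, i) : Fin n × Fin n))).card
              = b i - a i - 1 := by
            rw [Finset.card_image_of_injOn, Finset.card_attach, Nat.card_Ioo]
            intro u hu v hv he
            have e1 := (hpos u.1 u.2).choose_spec.1
            have e2 := (hpos v.1 v.2).choose_spec.1
            have e3 : (hpos u.1 u.2).choose = (hpos v.1 v.2).choose :=
              congrArg Prod.fst he
            apply Subtype.ext
            rw [← e1, ← e2, e3]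
          calc b i - a i - 1 = _ := hcardim.symm
            _ ≤ (A \ B).card := Finset.card_le_card hsub
        have hsum : (∑ k, b k) + a i = (∑ k, a k) + b i := by
          rw [← Finset.sum_erase_add univ b (Finset.mem_univ i),
              ← Finset.sum_erase_add univ a (Finset.mem_univ i)]
          have : ∑ k ∈ univ.erase i, b k = ∑ k ∈ univ.erase i, a k :=
            Finset.sum_congr rfl (fun j hj => (hoff j (Finset.mem_erase.1 hj).1).symm)
          rw [this]
          ring
        have hsd := Finset.card_sdiff_of_subset hBA
        have hle := Finset.card_le_card hBA
        simp only [rlen]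
        have e1 : rinv a = A.card := rfl
        have e2 : rinv b = B.card := rfl
        omega

end Aux4

section Aux5
variable {n : ℕ}

private lemma step2_refine {a b : Fin n → ℕ} (ha : IsRook n a) (hb : IsRook n b)
    (h : Step2 a b) : (∃ z, RookLt n a z ∧ RookLt n z b) ∨ rlen b ≤ rlen a + 1 := by
  classical
  obtain ⟨i, j, hij, hvw, hbi, hbj, hoff⟩ := h
  have hij' : (i : Fin n) ≠ j := hij.ne
  have hw0 : 0 < a j := lt_of_le_of_lt (Nat.zero_le _) hvw
  by_cases hmid : ∃ k, i < k ∧ k < j ∧ a i < a k ∧ a k < a j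
  · obtain ⟨k, hik, hkj, h1, h2⟩ := hmid
    have hz : IsRook n (swapAt a i k) := isRook_swapAt ha i k
    have hs1 : Step2 a (swapAt a i k) := step2_swapAt hik h1
    have hz2 : IsRook n (swapAt (swapAt a i k) i j) := isRook_swapAt hz i j
    have hzj : swapAt a i k j = a j := swapAt_other a hij.ne' hkj.ne'
    have hs2 : Step2 (swapAt a i k) (swapAt (swapAt a i k) i j) := by
      refine step2_swapAt hij ?_
      rw [swapAt_fst, hzj]; exact h2
    have hz2i : swapAt (swapAt a i k) i j i = a j := by rw [swapAt_fst, hzj]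
    have hz2j : swapAt (swapAt a i k) i j j = a k := by
      rw [swapAt_snd _ hij.ne, swapAt_fst]
    have hz2k : swapAt (swapAt a i k) i j k = a i := by
      rw [swapAt_other _ hik.ne' hkj.ne, swapAt_snd a hik.ne]
    have hs3 : Step2 (swapAt (swapAt a i k) i j) b := by
      refine ⟨k, j, hkj, ?_, ?_, ?_, fun m hm1 hm2 => ?_⟩
      · rw [hz2k, hz2j]; exact h1
      · rw [hz2j, ← hoff k hik.ne' hkj.ne]
      · rw [hz2k, hbj]
      · by_cases hmi : m = i
        · rw [hmi, hz2i, hbi]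
        · rw [swapAt_other _ hmi hm2, swapAt_other a hmi hm1]
          exact hoff m hmi hm2
    exact Or.inl ⟨_, rlt_of_step ⟨ha, hz, Or.inr hs1⟩,
      rlt_of_chain2 ⟨hz, hz2, Or.inr hs2⟩ ⟨hz2, hb, Or.inr hs3⟩⟩
  · by_cases hmid0 : a i = 0 ∧ ∃ k, i < k ∧ k < j ∧ a k = 0
    · obtain ⟨hv0, k, hik, hkj, hak⟩ := hmid0
      have hz : IsRook n (swapAt a k j) := isRook_swapAt ha k j
      have hs1 : Step2 a (swapAt a k j) := step2_swapAt hkj (by omega)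
      have hs2 : Step2 (swapAt a k j) b := by
        refine ⟨i, k, hik, ?_, ?_, ?_, fun m hm1 hm2 => ?_⟩
        · rw [swapAt_other a hik.ne (hik.trans hkj).ne, swapAt_fst, hv0]; exact hw0
        · rw [swapAt_fst, hbi]
        · rw [swapAt_other a hik.ne (hik.trans hkj).ne, ← hoff k hik.ne' hkj.ne, hak, hv0]
        · by_cases hmj : m = j
          · rw [hmj, swapAt_snd a hkj.ne, hbj, hak, hv0]
          · rw [swapAt_other a hm2 hmj]
            exact hoff m hm1 hmj
      exact Or.inl ⟨_, rlt_of_step ⟨ha, hz, Or.inr hs1⟩, rlt_of_step ⟨hz, hb, Or.inr hs2⟩⟩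
    · right
      push_neg at hmid hmid0
      set A := ((univ ×ˢ univ).filter
        fun p : Fin n × Fin n => p.1 < p.2 ∧ a p.2 < a p.1) with hA
      set B := ((univ ×ˢ univ).filter
        fun p : Fin n × Fin n => p.1 < p.2 ∧ b p.2 < b p.1) with hB
      have hsum : (∑ k, a k) = (∑ k, b k) := by
        have hab : ∀ k, a k = b (Equiv.swap i j k) := by
          intro k
          by_cases hk : k = i
          · subst hk; rw [Equiv.swap_apply_left, hbj]
          · by_cases hk2 : k = j
            · subst hk2; rw [Equiv.swap_apply_right, hbi]
            · rw [Equiv.swap_apply_of_ne_of_ne hk hk2]; exact hoff k hk hk2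
        calc (∑ k, a k) = ∑ k, b (Equiv.swap i j k) := Finset.sum_congr rfl fun k _ => hab k
          _ = ∑ k, b k := Equiv.sum_comp (Equiv.swap i j) b
      set f : Fin n × Fin n → Fin n × Fin n := (fun q =>
        if q.1 = i ∧ a i ≤ a q.2 then (j, q.2)
        else if q.2 = j ∧ a q.1 < a j then (q.1, i) else q) with hf
      set g : Fin n × Fin n → Fin n × Fin n := (fun r =>
        if r.1 = j then (if a r.2 < a i then r else (i, r.2))
        else if r.2 = i then (if a r.1 < a j then (r.1, j) else r) else r) with hg
      have key : ∀ q ∈ B.erase (i, j), f q ∈ A ∧ g (f q) = q := by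
        intro q hq
        rw [Finset.mem_erase, hB, mem_invSet] at hq
        obtain ⟨hqne, hq1, hq2⟩ := hq
        by_cases h1i : q.1 = i
        · have hq2i : q.2 ≠ i := by rw [← h1i]; exact hq1.ne'
          have hq2j : q.2 ≠ j := fun hc => hqne (Prod.ext h1i hc)
          have hb2 : b q.2 = a q.2 := (hoff _ hq2i hq2j).symm
          rw [h1i, hbi] at hq2
          rw [hb2] at hq2
          by_cases hvc : a i ≤ a q.2
          · have hjq2 : j < q.2 := by
              rcases lt_trichotomy q.2 j with hlt | heq | hgt
              · exfalso
                rcases lt_or_eq_of_le hvc with hlt2 | heq2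
                · have := hmid q.2 (h1i ▸ hq1) hlt hlt2
                  omega
                · by_cases hz0 : a i = 0
                  · exact hmid0 hz0 q.2 (h1i ▸ hq1) hlt (by omega)
                  · exact hq2i (ha.2 q.2 i (by omega) heq2.symm)
              · exact absurd heq hq2j
              · exact hgt
            have hfq : f q = (j, q.2) := by
              simp only [hf]; rw [if_pos ⟨h1i, hvc⟩]
            rw [hfq]
            constructor
            · rw [hA, mem_invSet]
              exact ⟨hjq2, hq2⟩
            · simp only [hg]
              rw [if_pos trivial, if_neg (not_lt.2 hvc)]
              exact Prod.ext h1i.symm rfl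
          · have hfq : f q = q := by
              simp only [hf]
              rw [if_neg (fun hc => hvc hc.2), if_neg (fun hc => hq2j hc.1)]
            rw [hfq]
            constructor
            · rw [hA, mem_invSet]
              refine ⟨hq1, ?_⟩
              rw [h1i]
              omega
            · simp only [hg]
              rw [if_neg (show q.1 ≠ j from fun hc => hij' (h1i.symm.trans hc)),
                if_neg hq2i]
        · by_cases h2i : q.2 = i
          · have hlt : q.1 < i := h2i ▸ hq1
            have hq1j : q.1 ≠ j := (hlt.trans hij).ne
            have hb1 : b q.1 = a q.1 := (hoff _ hlt.ne hq1j).symm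
            rw [h2i, hbi, hb1] at hq2
            have hfq : f q = q := by
              simp only [hf]
              rw [if_neg (fun hc => h1i hc.1),
                if_neg (show ¬(q.2 = j ∧ a q.1 < a j) from
                  fun hc => hij' (h2i.symm.trans hc.1))]
            rw [hfq]
            constructor
            · rw [hA, mem_invSet]
              refine ⟨hq1, ?_⟩
              rw [h2i]
              omega
            · simp only [hg]
              rw [if_neg hq1j, if_pos h2i, if_neg (show ¬ a q.1 < a j by omega)]
          · by_cases h2j : q.2 = j
            · have hq1j : q.1 ≠ j := (h2j ▸ hq1).ne
              have hb1 : b q.1 = a q.1 := (hoff _ h1i hq1j).symm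
              rw [h2j, hbj, hb1] at hq2
              by_cases hwc : a q.1 < a j
              · have hlt : q.1 < i := by
                  rcases lt_trichotomy q.1 i with hlt | heq | hgt
                  · exact hlt
                  · exact absurd heq h1i
                  · exfalso
                    have := hmid q.1 hgt (h2j ▸ hq1) hq2
                    omega
                have hfq : f q = (q.1, i) := by
                  simp only [hf]
                  rw [if_neg (fun hc => h1i hc.1), if_pos ⟨h2j, hwc⟩]
                rw [hfq]
                constructor
                · rw [hA, mem_invSet]
                  exact ⟨hlt, hq2⟩
                · simp only [hg]
                  rw [if_neg hq1j, if_pos trivial, if_pos hwc]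
                  exact Prod.ext rfl h2j.symm
              · have haj : a j < a q.1 := by
                  rcases lt_or_eq_of_le (not_lt.1 hwc) with hh | hh
                  · exact hh
                  · exact absurd (ha.2 j q.1 (by omega) hh) (fun hc => hq1j hc.symm)
                have hfq : f q = q := by
                  simp only [hf]
                  rw [if_neg (fun hc => h1i hc.1), if_neg (fun hc => hwc hc.2)]
                rw [hfq]
                constructor
                · rw [hA, mem_invSet]
                  refine ⟨hq1, ?_⟩
                  rw [h2j]
                  exact haj
                · simp only [hg]
                  rw [if_neg hq1j,
                    if_neg (show q.2 ≠ i from fun hc => hij' (hc.symm.trans h2j))]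
            · by_cases h1j : q.1 = j
              · have hb2 : b q.2 = a q.2 := (hoff _ h2i h2j).symm
                rw [h1j, hbj, hb2] at hq2
                have hfq : f q = q := by
                  simp only [hf]
                  rw [if_neg (fun hc => hij' (hc.1.symm.trans h1j)),
                    if_neg (fun hc => h2j hc.1)]
                rw [hfq]
                constructor
                · rw [hA, mem_invSet]
                  refine ⟨hq1, ?_⟩
                  rw [h1j]
                  omega
                · simp only [hg]
                  rw [if_pos h1j, if_pos hq2]
              · have hfq : f q = q := by
                  simp only [hf]
                  rw [if_neg (fun hc => h1i hc.1), if_neg (fun hc => h2j hc.1)]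
                rw [hfq]
                constructor
                · rw [hA, mem_invSet]
                  exact ⟨hq1, by rw [hoff _ h1i h1j, hoff _ h2i h2j]; exact hq2⟩
                · simp only [hg]
                  rw [if_neg h1j, if_neg h2i]
      have hijB : (i, j) ∈ B := by
        rw [hB, mem_invSet]
        exact ⟨hij, by rw [hbi, hbj]; exact hvw⟩
      have hcard : (B.erase (i, j)).card ≤ A.card := by
        apply Finset.card_le_card_of_injOn f (fun q hq => (key q hq).1)
        intro p hp q hq he
        rw [Finset.mem_coe] at hp hq
        rw [← (key p hp).2, ← (key q hq).2, he]
      have hBcard := Finset.card_erase_of_mem hijB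
      have hBpos : 0 < B.card := Finset.card_pos.2 ⟨_, hijB⟩
      simp only [rlen]
      have e1 : rinv a = A.card := rfl
      have e2 : rinv b = B.card := rfl
      omega

end Aux5

theorem rook_order_graded (n : ℕ) (x y : Fin n → ℕ)
    (hx : IsRook n x) (hy : IsRook n y) :
    (RookLt n x y → rlen x < rlen y) ∧
    (RookCov n x y ↔ RookLt n x y ∧ rlen y = rlen x + 1) := by
  refine ⟨fun h => rlt_rlen h, ?_, ?_⟩
  · rintro ⟨hlt, hcov⟩
    refine ⟨hlt, ?_⟩
    obtain ⟨hle, hne⟩ := hlt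
    rcases Relation.ReflTransGen.cases_head hle with rfl | ⟨z, hz, hzy⟩
    · exact absurd rfl hne
    by_cases hzy' : z = y
    · subst hzy'
      rcases hz.2.2 with h1 | h2
      · rcases step1_refine hz.1 hz.2.1 h1 with ⟨w, hw1, hw2⟩ | hle1
        · exact (hcov w hw1 hw2).elim
        · have := rstep_lt hz; omega
      · rcases step2_refine hz.1 hz.2.1 h2 with ⟨w, hw1, hw2⟩ | hle1
        · exact (hcov w hw1 hw2).elim
        · have := rstep_lt hz; omega
    · exact (hcov z (rlt_of_step hz) ⟨hzy, hzy'⟩).elim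
  · rintro ⟨hlt, hlen⟩
    refine ⟨hlt, fun z h1 h2 => ?_⟩
    have t1 := rlt_rlen h1
    have t2 := rlt_rlen h2
    omega
end
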